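/- arXiv:1904.10272 — 3 statements merged into one kernel-verified Lean document; each statement's English description precedes it below -/
import Mathlib

section
/- csAUC(D) = 1 if and only if for every pair (x_h, x_l) with level(x_h) > level(x_l) we have pCTR_h·bid_h ≥ pCTR_l·bid_l, assuming all bids of positive samples are strictly positive and bid_l < bid_h whenever x_l is positive and level(x_l) < level(x_h). -/
open Finset

/-- csAUC = 1 iff every level-ordered pair is correctly ordered by pCPM = pCTR * bid,
assuming positive samples have strictly positive bids and strictly smaller bid at
strictly smaller level. -/
theorem csauc_eq_one_iff {ι : Type*} [Fintype ι]
    (label : ι → Bool) (bid pctr : ι → ℝ) (level : ι → ℕ)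
    (hbid : ∀ x, 0 ≤ bid x) (hpctr : ∀ x, 0 ≤ pctr x)
    (hposbid : ∀ x, label x = true → 0 < bid x)
    (hneg : ∀ x, label x = false → level x = 0)
    (hpos : ∀ x, label x = true → 1 ≤ level x)
    (hmono : ∀ x y, label x = true → label y = true → bid x < bid y → level x < level y)
    (hbidlt : ∀ h l, label l = true → level l < level h → bid l < bid h)
    (hden : 0 < ∑ h, ∑ l, if level l < level h then bid h else 0) :
    (∑ h, ∑ l, if level l < level h then
        (if pctr l * bid l ≤ pctr h * bid h then bid h
         else if label l = true then bid l else 0)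
      else 0) /
    (∑ h, ∑ l, if level l < level h then bid h else 0) = 1 ↔
    ∀ h l, level l < level h → pctr l * bid l ≤ pctr h * bid h := by
  rw [div_eq_one_iff_eq hden.ne']
  -- termwise bound
  have key : ∀ h l : ι, (if level l < level h then
        (if pctr l * bid l ≤ pctr h * bid h then bid h
         else if label l = true then bid l else 0)
      else 0) ≤ (if level l < level h then bid h else 0) := by
    intro h l
    by_cases hlt : level l < level h
    · simp only [if_pos hlt]
      by_cases hc : pctr l * bid l ≤ pctr h * bid h
      · simp [hc]
      · rw [if_neg hc]
        have hlabh : label h = true := by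
          cases hh : label h
          · exact absurd hlt (by simp [hneg h hh])
          · rfl
        cases hl : label l
        · simp [hposbid h hlabh |>.le]
        · simpa using (hbidlt h l hl hlt).le
    · simp [hlt]
  constructor
  · intro hND h l hlt
    by_contra hc
    push_neg at hc
    have hlabh : label h = true := by
      cases hh : label h
      · exact absurd hlt (by simp [hneg h hh])
      · rfl
    have hbh : 0 < bid h := hposbid h hlabh
    have strict : (if level l < level h then
        (if pctr l * bid l ≤ pctr h * bid h then bid h
         else if label l = true then bid l else 0)
      else 0) < (if level l < level h then bid h else 0) := by
      rw [if_pos hlt, if_pos hlt, if_neg (not_le.2 hc)]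
      cases hl : label l
      · simpa using hbh
      · simpa using hbidlt h l hl hlt
    have hN : (∑ p ∈ Finset.univ ×ˢ Finset.univ, if level p.2 < level p.1 then
        (if pctr p.2 * bid p.2 ≤ pctr p.1 * bid p.1 then bid p.1
         else if label p.2 = true then bid p.2 else 0)
      else 0) < ∑ p ∈ Finset.univ ×ˢ Finset.univ, (if level p.2 < level p.1 then bid p.1 else 0) := by
      refine Finset.sum_lt_sum (fun p _ => key p.1 p.2) ⟨(h, l), Finset.mem_product.2 ⟨Finset.mem_univ _, Finset.mem_univ _⟩, strict⟩
    rw [Finset.sum_product, Finset.sum_product] at hN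
    exact absurd hND hN.ne
  · intro hall
    refine Finset.sum_congr rfl fun h _ => Finset.sum_congr rfl fun l _ => ?_
    by_cases hlt : level l < level h
    · simp [hlt, hall h l hlt]
    · simp [hlt]
end

section
/- csAUC = 1 implies that the pCPM ordering (pCTR·bid) of samples is consistent with the level ordering: in particular every positive sample with positive pCPM has pCPM at least as large as that of every negative sample, and among positive samples, higher bid implies (weakly) higher pCPM. -/
open Finset

/-- csAUC = 1 implies the pCPM ordering is consistent with the level ordering:
every positive sample with positive pCPM has pCPM at least that of every negative
sample, and among positives a higher bid implies weakly higher pCPM. -/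
theorem csauc_eq_one_consistent {ι : Type*} [Fintype ι]
    (label : ι → Bool) (bid pctr : ι → ℝ) (level : ι → ℕ)
    (hbid : ∀ x, 0 ≤ bid x) (hpctr : ∀ x, 0 ≤ pctr x)
    (hposbid : ∀ x, label x = true → 0 < bid x)
    (hneg : ∀ x, label x = false → level x = 0)
    (hpos : ∀ x, label x = true → 1 ≤ level x)
    (hmono : ∀ x y, label x = true → label y = true → bid x < bid y → level x < level y)
    (hden : 0 < ∑ h, ∑ l, if level l < level h then bid h else 0)
    (hcs : (∑ h, ∑ l, if level l < level h then
        (if pctr l * bid l ≤ pctr h * bid h then bid h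
         else if label l = true then bid l else 0)
      else 0) /
    (∑ h, ∑ l, if level l < level h then bid h else 0) = 1) :
    (∀ p n, label p = true → label n = false → 0 < pctr p * bid p →
        pctr n * bid n ≤ pctr p * bid p) ∧
    (∀ p q, label p = true → label q = true → bid p < bid q →
        pctr p * bid p ≤ pctr q * bid q) := by

  set f : ι → ι → ℝ := fun h l => if level l < level h then
        (if pctr l * bid l ≤ pctr h * bid h then bid h
         else if label l = true then bid l else 0)
      else 0 with hf
  set g : ι → ι → ℝ := fun h l => if level l < level h then bid h else 0 with hg
  have hlab : ∀ h l : ι, level l < level h → label h = true := by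
    intro h l hl
    cases hh : label h with
    | false => have := hneg h hh; omega
    | true => rfl
  have hle : ∀ h l : ι, f h l ≤ g h l := by
    intro h l
    simp only [hf, hg]
    split_ifs with h1 h2 h3
    · exact le_refl _
    · by_contra hc
      push_neg at hc
      have := hmono h l (hlab h l h1) h3 hc
      omega
    · exact hbid h
    · exact le_refl _
  have hND : (∑ h, ∑ l, f h l) = ∑ h, ∑ l, g h l := by
    have := (div_eq_one_iff_eq hden.ne').mp hcs
    simpa [hf, hg] using this
  have houter : ∀ h ∈ (univ : Finset ι), (∑ l, f h l) = ∑ l, g h l :=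
    (Finset.sum_eq_sum_iff_of_le (fun h _ =>
      Finset.sum_le_sum (fun l _ => hle h l))).mp hND
  have heq : ∀ h l : ι, f h l = g h l := by
    intro h l
    exact (Finset.sum_eq_sum_iff_of_le (fun l _ => hle h l)).mp
      (houter h (mem_univ h)) l (mem_univ l)
  constructor
  · intro p n hp hn hppos
    have hlv : level n < level p := by
      have := hneg n hn; have := hpos p hp; omega
    have := heq p n
    simp only [hf, hg, if_pos hlv, hn] at this
    by_contra hc
    push_neg at hc
    rw [if_neg (not_le.mpr hc)] at this
    simp at this
    exact absurd this.symm (hposbid p hp).ne'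
  · intro p q hp hq hlt
    have hlv : level p < level q := hmono p q hp hq hlt
    have := heq q p
    simp only [hf, hg, if_pos hlv, hp] at this
    by_contra hc
    push_neg at hc
    rw [if_neg (not_le.mpr hc)] at this; simp at this
    exact absurd this hlt.ne
end

section
/- For a dataset with exactly one negative sample and n positive samples with pairwise distinct positive bids, csAUC depends only on the ranking (permutation by pCPM) of the n+1 samples, and the ranking maximizing csAUC is the one placing the positives in decreasing bid order above the negative sample; this maximum value is 1. -/
open Finset

/-- csAUC for a dataset with one negative sample (`none`, level 0, T = 0) and
`n` positive samples (`some i`, level `i+1`, bids `b i` increasing in level),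
ranked by the pCPM scores `p`:  for each pair (x_h, x_l) with
level(x_h) > level(x_l), Rev = bid_h if x_h is ranked above x_l, else T(x_l). -/
noncomputable def csauc (n : ℕ) (b : Fin n → ℝ) (p : Option (Fin n) → ℝ) : ℝ :=
  (∑ h : Option (Fin n), ∑ l : Option (Fin n),
    if l.elim 0 (fun i => (i : ℕ) + 1) < h.elim 0 (fun i => (i : ℕ) + 1) then
      (if p l ≤ p h then h.elim 0 b else l.elim 0 b)
    else 0) /
  (∑ h : Option (Fin n), ∑ l : Option (Fin n),
    if l.elim 0 (fun i => (i : ℕ) + 1) < h.elim 0 (fun i => (i : ℕ) + 1) then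
      h.elim 0 b
    else 0)

/-- With one negative and `n` positives with pairwise distinct positive bids,
csAUC depends only on the induced ranking; it is maximized — with maximum
value 1 — by the ranking placing the positives in decreasing bid order above
the negative sample. -/
theorem csauc_depends_on_ranking_and_max (n : ℕ) (hn : 1 ≤ n)
    (b : Fin n → ℝ) (hbpos : ∀ i, 0 < b i) (hb : StrictMono b) :
    (∀ p₁ p₂ : Option (Fin n) → ℝ, Function.Injective p₁ → Function.Injective p₂ →
        (∀ x y, p₁ x < p₁ y ↔ p₂ x < p₂ y) →
        csauc n b p₁ = csauc n b p₂) ∧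
    (∀ p : Option (Fin n) → ℝ, Function.Injective p → csauc n b p ≤ 1) ∧
    (∀ p : Option (Fin n) → ℝ, Function.Injective p →
        (∀ i j : Fin n, i < j → p (some i) < p (some j)) →
        (∀ i : Fin n, p none < p (some i)) →
        csauc n b p = 1) := by
  have hbd : ∀ h l : Option (Fin n),
      l.elim 0 (fun i => (i : ℕ) + 1) < h.elim 0 (fun i => (i : ℕ) + 1) →
      l.elim 0 b ≤ h.elim 0 b := by
    rintro (_|j) (_|i) hlt
    · simp at hlt
    · simp at hlt
    · simpa using (hbpos j).le
    · simp only [Option.elim] at hlt ⊢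
      exact (hb (show i < j from by exact_mod_cast Nat.lt_of_succ_lt_succ hlt)).le
  have hnn : ∀ h : Option (Fin n), (0:ℝ) ≤ h.elim 0 b := by
    rintro (_|i)
    · simp
    · simpa using (hbpos i).le
  have hD : 0 < ∑ h : Option (Fin n), ∑ l : Option (Fin n),
      if l.elim 0 (fun i => (i : ℕ) + 1) < h.elim 0 (fun i => (i : ℕ) + 1) then
        h.elim 0 b else 0 := by
    apply Finset.sum_pos'
    · intro h _
      apply Finset.sum_nonneg
      intro l _
      split
      · exact hnn h
      · exact le_refl 0
    · refine ⟨some ⟨0, hn⟩, Finset.mem_univ _, ?_⟩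
      apply Finset.sum_pos'
      · intro l _
        split
        · exact hnn _
        · exact le_refl 0
      · refine ⟨none, Finset.mem_univ _, ?_⟩
        simpa using hbpos ⟨0, hn⟩
  refine ⟨?_, ?_, ?_⟩
  · intro p₁ p₂ h₁ h₂ hiff
    unfold csauc
    congr 1
    apply Finset.sum_congr rfl
    intro h _
    apply Finset.sum_congr rfl
    intro l _
    split
    · have hle : p₁ l ≤ p₁ h ↔ p₂ l ≤ p₂ h := by
        rw [← not_lt, ← not_lt, hiff]
      by_cases hc : p₂ l ≤ p₂ h
      · rw [if_pos (hle.mpr hc), if_pos hc]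
      · rw [if_neg (fun hx => hc (hle.mp hx)), if_neg hc]
    · rfl
  · intro p _
    unfold csauc
    rw [div_le_one hD]
    apply Finset.sum_le_sum
    intro h _
    apply Finset.sum_le_sum
    intro l _
    split
    · split
      · exact le_refl _
      · exact hbd h l (by assumption)
    · exact le_refl 0
  · intro p _ hpos hneg
    unfold csauc
    rw [div_eq_one_iff_eq hD.ne']
    apply Finset.sum_congr rfl
    intro h _
    apply Finset.sum_congr rfl
    intro l _
    split
    · rename_i hlt
      rw [if_pos]
      rcases l with _|i <;> rcases h with _|j
      · simp at hlt
      · exact (hneg j).le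
      · simp at hlt
      · simp only [Option.elim] at hlt
        exact (hpos i j (by exact_mod_cast Nat.lt_of_succ_lt_succ hlt)).le
    · rfl
end
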